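/- Let f : ℝⁿ → ℝ be twice continuously differentiable with L₂-Lipschitz Hessian, let x ∈ ℝⁿ, g = ∇f(x), H = ∇²f(x), and T(s) = f(x) + gᵀs + (1/2)sᵀHs. Let 0 < σ_min ≤ σ ≤ σ_max, r > 0, 0 < C_low ≤ C_up, η₁ ∈ (0,1). Suppose s ∈ ℝⁿ satisfies (H + σrI)s = −g, sᵀ(H + σrI)s > 0, C_low r ≤ ‖s‖ ≤ C_up r, and the acceptance condition f(x) − f(x+s) ≥ η₁(T(0) − T(s)). Then f(x) − f(x+s) ≥ (η₁/2) σ_min C_low² κ₀ ‖∇f(x+s)‖^{3/2}, where κ₀ = (2/(C_up(L₂C_up + 2σ_max)))^{3/2}. -/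

import Mathlib

/-!
The regularized Newton equation `(H + σr I)s = -g` together with nonnegative curvature makes the
Taylor model decrease by at least `σr‖s‖²/2`, so acceptance yields a decrease of order `r³`.
The same equation cancels `g + Hs` up to `-σr s`, and the Lipschitz Hessian bounds the remaining
Taylor error, so `‖∇f(x+s)‖ ≤ (L₂/2)‖s‖² + σr‖s‖ = O(r²)`; eliminating `r` gives the power `3/2`.
-/

open RealInnerProductSpace

theorem norm_sub_sub_fderiv_le_of_lipschitz_fderiv
    {E F : Type*} [NormedAddCommGroup E] [NormedSpace ℝ E]
    [NormedAddCommGroup F] [NormedSpace ℝ F]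
    {G : E → F} (hG : Differentiable ℝ G) {L : ℝ}
    (hLip : ∀ y z, ‖fderiv ℝ G y - fderiv ℝ G z‖ ≤ L * ‖y - z‖) (x s : E) :
    ‖G (x + s) - G x - fderiv ℝ G x s‖ ≤ L / 2 * ‖s‖ ^ 2 := by
  set φ : ℝ → F := fun t => G (x + t • s) - G x - t • fderiv ℝ G x s
  have hφ : ∀ t : ℝ, HasDerivAt φ (fderiv ℝ G (x + t • s) s - fderiv ℝ G x s) t := by
    intro t
    have hline : HasDerivAt (fun t : ℝ => x + t • s) s t := by
      simpa using ((hasDerivAt_id t).smul_const s).const_add x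
    exact (((hG _).hasFDerivAt.comp_hasDerivAt t hline).sub_const (G x)).sub
      (by simpa using (hasDerivAt_id t).smul_const (fderiv ℝ G x s))
  have hB : ∀ t : ℝ, HasDerivAt (fun t => L / 2 * ‖s‖ ^ 2 * t ^ 2) (L * ‖s‖ ^ 2 * t) t :=
    fun t => ((hasDerivAt_pow 2 t).const_mul _).congr_deriv (by push_cast; ring)
  have hbound : ∀ t ∈ Set.Ico (0 : ℝ) 1,
      ‖fderiv ℝ G (x + t • s) s - fderiv ℝ G x s‖ ≤ L * ‖s‖ ^ 2 * t := by
    rintro t ⟨ht, -⟩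
    calc ‖fderiv ℝ G (x + t • s) s - fderiv ℝ G x s‖
        ≤ ‖fderiv ℝ G (x + t • s) - fderiv ℝ G x‖ * ‖s‖ :=
          (fderiv ℝ G (x + t • s) - fderiv ℝ G x).le_opNorm s
      _ ≤ L * ‖t • s‖ * ‖s‖ := by
          gcongr
          simpa using hLip (x + t • s) x
      _ = L * ‖s‖ ^ 2 * t := by
          rw [norm_smul, Real.norm_of_nonneg ht]; ring
  simpa [φ] using image_norm_le_of_norm_deriv_right_le_deriv_boundary
    (fun t _ => (hφ t).continuousAt.continuousWithinAt)
    (fun t _ => (hφ t).hasDerivWithinAt) (by simp [φ]) hB hbound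
    (Set.right_mem_Icc.2 zero_le_one)

theorem ContDiff.differentiable_gradient {F : Type*} [NormedAddCommGroup F]
    [InnerProductSpace ℝ F] [CompleteSpace F] {f : F → ℝ} (hf : ContDiff ℝ 2 f) :
    Differentiable ℝ (gradient f) :=
  ((InnerProductSpace.toDual ℝ F).symm.contDiff.comp
    (hf.fderiv_right (m := 1) (by norm_num))).differentiable (by norm_num)

theorem rpow_three_halves_mul_le_pow_three {c a r : ℝ} (hc : 0 ≤ c) (ha : 0 ≤ a) (hr : 0 ≤ r)
    (h : c * a ≤ r ^ 2) : c ^ ((3 : ℝ) / 2) * a ^ ((3 : ℝ) / 2) ≤ r ^ 3 := by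
  rw [← Real.mul_rpow hc ha]
  calc (c * a) ^ ((3 : ℝ) / 2) ≤ (r ^ 2) ^ ((3 : ℝ) / 2) :=
        Real.rpow_le_rpow (by positivity) h (by norm_num)
    _ = r ^ 3 := by
        rw [← Real.rpow_natCast r 2, ← Real.rpow_mul hr]; norm_num

theorem regularized_newton_step_model_decrease {E : Type*} [NormedAddCommGroup E]
    [InnerProductSpace ℝ E] (H : E →L[ℝ] E) {g s : E} {μ : ℝ}
    (hs : H s + μ • s = -g) (hcurv : 0 ≤ ⟪s, H s + μ • s⟫) :
    μ / 2 * ‖s‖ ^ 2 ≤ -(⟪g, s⟫ + 1 / 2 * ⟪s, H s⟫) := by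
  have hg : ⟪g, s⟫ = -⟪s, H s + μ • s⟫ := by
    rw [hs, inner_neg_right, real_inner_comm, neg_neg]
  rw [inner_add_right, real_inner_smul_right, real_inner_self_eq_norm_sq] at hg hcurv
  linarith

theorem norm_apply_add_le_of_fderiv_add_smul_eq_neg {E : Type*} [NormedAddCommGroup E]
    [NormedSpace ℝ E] {G : E → E} (hG : Differentiable ℝ G) {L : ℝ}
    (hLip : ∀ y z, ‖fderiv ℝ G y - fderiv ℝ G z‖ ≤ L * ‖y - z‖) {x s : E} {μ : ℝ}
    (hμ : 0 ≤ μ) (hs : fderiv ℝ G x s + μ • s = -G x) :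
    ‖G (x + s)‖ ≤ L / 2 * ‖s‖ ^ 2 + μ * ‖s‖ := by
  have hsplit : G (x + s) = (G (x + s) - G x - fderiv ℝ G x s) - μ • s := by
    rw [← neg_neg (G x), ← hs]
    abel
  calc ‖G (x + s)‖ = ‖(G (x + s) - G x - fderiv ℝ G x s) - μ • s‖ := congrArg norm hsplit
    _ ≤ ‖G (x + s) - G x - fderiv ℝ G x s‖ + ‖μ • s‖ := norm_sub_le _ _
    _ ≤ L / 2 * ‖s‖ ^ 2 + μ * ‖s‖ := by
        rw [norm_smul, Real.norm_of_nonneg hμ]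
        gcongr
        exact norm_sub_sub_fderiv_le_of_lipschitz_fderiv hG hLip x s

/-- Function decrease on a successful regularized Newton iteration:
if `(H + σrI)s = -g`, `sᵀ(H + σrI)s > 0`, `C_low r ≤ ‖s‖ ≤ C_up r`, and
`f(x) - f(x+s) ≥ η₁(T(0) - T(s))`, then
`f(x) - f(x+s) ≥ (η₁/2)σ_min C_low² κ₀ ‖∇f(x+s)‖^{3/2}` with
`κ₀ = (2/(C_up(L₂C_up + 2σ_max)))^{3/2}`. -/
theorem decrease_successful_regularized_newton
    (n : ℕ) (f : EuclideanSpace ℝ (Fin n) → ℝ) (L₂ : ℝ) (hL₂ : 0 < L₂)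
    (hf : ContDiff ℝ 2 f)
    (hLip : ∀ y z : EuclideanSpace ℝ (Fin n),
      ‖fderiv ℝ (gradient f) y - fderiv ℝ (gradient f) z‖ ≤ L₂ * ‖y - z‖)
    (x : EuclideanSpace ℝ (Fin n))
    (T : EuclideanSpace ℝ (Fin n) → ℝ)
    (hT : ∀ s : EuclideanSpace ℝ (Fin n),
      T s = f x + ⟪gradient f x, s⟫ + (1 / 2) * ⟪s, fderiv ℝ (gradient f) x s⟫)
    (σ σ_min σ_max r C_low C_up η₁ : ℝ)
    (hσmin : 0 < σ_min) (hσlo : σ_min ≤ σ) (hσhi : σ ≤ σ_max)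
    (hr : 0 < r) (hClow : 0 < C_low) (hCle : C_low ≤ C_up)
    (hη₁ : η₁ ∈ Set.Ioo (0 : ℝ) 1)
    (s : EuclideanSpace ℝ (Fin n))
    (hs : fderiv ℝ (gradient f) x s + (σ * r) • s = -gradient f x)
    (hcurv : 0 < ⟪s, fderiv ℝ (gradient f) x s + (σ * r) • s⟫)
    (hlow : C_low * r ≤ ‖s‖) (hup : ‖s‖ ≤ C_up * r)
    (hacc : f x - f (x + s) ≥ η₁ * (T 0 - T s)) :
    f x - f (x + s) ≥ (η₁ / 2) * σ_min * C_low ^ 2 *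
      (2 / (C_up * (L₂ * C_up + 2 * σ_max))) ^ ((3 : ℝ) / 2) *
      ‖gradient f (x + s)‖ ^ ((3 : ℝ) / 2) := by
  obtain ⟨hη₁, -⟩ := hη₁
  have hσ : 0 < σ := hσmin.trans_le hσlo
  have hσmax : 0 < σ_max := hσ.trans_le hσhi
  have hCup : 0 < C_up := hClow.trans_le hCle
  have hD : 0 < C_up * (L₂ * C_up + 2 * σ_max) := by positivity
  have hmodel : σ * r / 2 * ‖s‖ ^ 2 ≤ T 0 - T s := by
    have hT0 : T 0 = f x := by simp [hT]
    rw [hT0, hT s]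
    linarith [regularized_newton_step_model_decrease _ hs hcurv.le]
  have hdecrease : η₁ / 2 * σ_min * C_low ^ 2 * r ^ 3 ≤ f x - f (x + s) :=
    calc η₁ / 2 * σ_min * C_low ^ 2 * r ^ 3 = η₁ * (σ_min * r / 2 * (C_low * r) ^ 2) := by ring
      _ ≤ η₁ * (σ * r / 2 * ‖s‖ ^ 2) := by gcongr
      _ ≤ f x - f (x + s) := (mul_le_mul_of_nonneg_left hmodel hη₁.le).trans hacc
  have hgrad : 2 / (C_up * (L₂ * C_up + 2 * σ_max)) * ‖gradient f (x + s)‖ ≤ r ^ 2 := by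
    rw [div_mul_eq_mul_div, div_le_iff₀ hD]
    calc 2 * ‖gradient f (x + s)‖ ≤ 2 * (L₂ / 2 * ‖s‖ ^ 2 + σ * r * ‖s‖) := by
          gcongr
          exact norm_apply_add_le_of_fderiv_add_smul_eq_neg hf.differentiable_gradient hLip
            (by positivity) hs
      _ ≤ 2 * (L₂ / 2 * (C_up * r) ^ 2 + σ_max * r * (C_up * r)) := by gcongr
      _ = r ^ 2 * (C_up * (L₂ * C_up + 2 * σ_max)) := by ring
  rw [ge_iff_le, mul_assoc]
  refine le_trans ?_ hdecrease
  gcongr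
  exact rpow_three_halves_mul_le_pow_three (div_pos two_pos hD).le (norm_nonneg _) hr.le hgrad
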